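/- arXiv:2405.18183 — 3 statements merged into one kernel-verified Lean document; each statement's English description precedes it below -/
import Mathlib

section
/- Let ξ^s and ξ^b be independent centered random variables supported in [−C,C] with densities f^s, f^b bounded by L, let θ^s, θ^b ∈ ℝ^d with ‖θ^s‖, ‖θ^b‖ ≤ A, let x ∈ ℝ^d with ‖x‖ ≤ B, and set P = C + AB. Define s = xᵀθ^s + ξ^s, b = xᵀθ^b + ξ^b, and EGFT(x,p) = E[1{s ≤ p}1{p ≤ b}(b − s)]. Then, for every p, EGFT(x,p) = I(δ^b)·F^s(δ^s) + J(δ^s)·D^b(δ^b), where δ^s = p − xᵀθ^s, δ^b = p − xᵀθ^b, F^s is the c.d.f. of ξ^s, D^b(u) = P(ξ^b ≥ u), I(δ) = ∫_δ^C D^b(u) du, and J(δ) = ∫_{−C}^δ F^s(u) du. -/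
open MeasureTheory ProbabilityTheory Set
open scoped InnerProductSpace ENNReal

/-!
Split the trade event at the posted price: on `{ξˢ ≤ δˢ, δᵇ ≤ ξᵇ}` the gain
`b - s = (ξᵇ - δᵇ) + (δˢ - ξˢ)`, so pointwise
`GFT = 1{ξˢ ≤ δˢ} (ξᵇ - δᵇ)⁺ + 1{δᵇ ≤ ξᵇ} (δˢ - ξˢ)⁺`.
By independence each product has expectation equal to the product of expectations, and the
layer-cake formula turns `E (ξᵇ - δᵇ)⁺` into `∫_{δᵇ}^C P(ξᵇ ≥ u) du` and `E (δˢ - ξˢ)⁺` into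
`∫_{-C}^{δˢ} P(ξˢ ≤ u) du`, the noises being bounded by `C`.
-/

lemma ite_add_le_and_le_add_sub_eq_indicator_mul_max_add (a c p u v : ℝ) :
    (if a + u ≤ p ∧ p ≤ c + v then (c + v) - (a + u) else 0)
      = (Iic (p - a)).indicator 1 u * max (v - (p - c)) 0
        + (Ici (p - c)).indicator 1 v * max ((p - a) - u) 0 := by
  simp only [indicator_apply, mem_Iic, mem_Ici, Pi.one_apply]
  by_cases hu : u ≤ p - a <;> by_cases hv : p - c ≤ v
  · rw [if_pos ⟨by linarith, by linarith⟩, if_pos hu, if_pos hv,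
      max_eq_left (by linarith), max_eq_left (by linarith)]
    ring
  · rw [if_neg fun h => hv (by linarith [h.2]), if_neg hv, max_eq_right (by linarith)]
    simp
  · rw [if_neg fun h => hu (by linarith [h.1]), if_neg hu,
      max_eq_right (show p - a - u ≤ 0 by linarith)]
    simp
  · rw [if_neg fun h => hu (by linarith [h.1]), if_neg hu, if_neg hv]
    simp

section

variable {Ω : Type*} [MeasurableSpace Ω] {μ : Measure Ω}

lemma ae_mem_of_map_eq_withDensity {α : Type*} [MeasurableSpace α] {ν : Measure α}
    {X : Ω → α} (hX : Measurable X) {f : α → ℝ≥0∞} {s : Set α} (hs : MeasurableSet s)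
    (hlaw : μ.map X = ν.withDensity f) (hf : ∀ u ∉ s, f u = 0) :
    ∀ᵐ ω ∂μ, X ω ∈ s := by
  rw [ae_iff]
  change μ (X ⁻¹' sᶜ) = 0
  rw [← Measure.map_apply hX hs.compl, hlaw, withDensity_apply _ hs.compl,
    setLIntegral_congr_fun hs.compl (g := fun _ => 0) hf, lintegral_zero]

lemma integrable_indicator_comp_mul {X Y : Ω → ℝ} (hX : Measurable X) {s : Set ℝ}
    (hs : MeasurableSet s) {g : ℝ → ℝ} (hg : Integrable (fun ω => g (Y ω)) μ) :
    Integrable (fun ω => s.indicator 1 (X ω) * g (Y ω)) μ := by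
  have : (fun ω => s.indicator 1 (X ω) * g (Y ω))
      = (X ⁻¹' s).indicator (fun ω => g (Y ω)) := by
    ext ω
    by_cases h : X ω ∈ s <;> simp [h]
  exact this ▸ hg.indicator (hX hs)

lemma ProbabilityTheory.IndepFun.integral_indicator_comp_mul [IsFiniteMeasure μ] {X Y : Ω → ℝ}
    (hXY : IndepFun X Y μ) (hX : Measurable X) (hY : Measurable Y) {s : Set ℝ}
    (hs : MeasurableSet s) {g : ℝ → ℝ} (hg : Measurable g) :
    ∫ ω, s.indicator 1 (X ω) * g (Y ω) ∂μ = μ.real {ω | X ω ∈ s} * ∫ ω, g (Y ω) ∂μ := by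
  have hφ : Measurable (s.indicator (1 : ℝ → ℝ)) := measurable_one.indicator hs
  have h := (hXY.comp hφ hg).integral_mul_eq_mul_integral (hφ.comp hX).aestronglyMeasurable
    (hg.comp hY).aestronglyMeasurable
  simp only [Pi.mul_apply, Function.comp_apply] at h
  rw [h]
  congr 1
  exact integral_indicator_one (hX hs)

variable [IsFiniteMeasure μ]

lemma integrable_max_sub_const_zero_of_ae_le {X : Ω → ℝ} (hX : AEMeasurable X μ) {C : ℝ}
    (hC : ∀ᵐ ω ∂μ, X ω ≤ C) (δ : ℝ) : Integrable (fun ω => max (X ω - δ) 0) μ := by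
  refine Integrable.mono' (integrable_const (max (C - δ) 0))
    ((hX.sub_const δ).max aemeasurable_const).aestronglyMeasurable ?_
  filter_upwards [hC] with ω hω
  rw [Real.norm_of_nonneg (le_max_right _ _)]
  exact max_le_max_right 0 (by linarith)

lemma integrable_max_const_sub_zero_of_ae_ge {X : Ω → ℝ} (hX : AEMeasurable X μ) {C : ℝ}
    (hC : ∀ᵐ ω ∂μ, C ≤ X ω) (δ : ℝ) : Integrable (fun ω => max (δ - X ω) 0) μ := by
  simpa [neg_add_eq_sub] using
    integrable_max_sub_const_zero_of_ae_le hX.neg (hC.mono fun ω hω => neg_le_neg hω) (-δ)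

lemma integral_max_sub_const_zero_eq_intervalIntegral_meas_le {X : Ω → ℝ}
    (hX : AEMeasurable X μ) {C : ℝ} (hC : ∀ᵐ ω ∂μ, X ω ≤ C) (δ : ℝ) :
    ∫ ω, max (X ω - δ) 0 ∂μ = ∫ u in δ..C, μ.real {ω | u ≤ X ω} := by
  rcases le_or_gt δ C with hδ | hδ
  · have hbdd : (fun ω => max (X ω - δ) 0) ≤ᵐ[μ] fun _ => C - δ := by
      filter_upwards [hC] with ω hω
      exact max_le (by linarith) (by linarith)
    rw [(integrable_max_sub_const_zero_of_ae_le hX hC δ).integral_eq_integral_Ioc_meas_le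
      (ae_of_all _ fun _ => le_max_right _ _) hbdd]
    have hlevel : ∀ t ∈ Ioc 0 (C - δ),
        μ.real {ω | t ≤ max (X ω - δ) 0} = μ.real {ω | δ + t ≤ X ω} := by
      intro t ht
      congr 1
      ext ω
      simp only [mem_ofPred_eq, le_max_iff, not_le.2 ht.1, or_false]
      constructor <;> intro h <;> linarith
    rw [setIntegral_congr_fun measurableSet_Ioc hlevel,
      ← intervalIntegral.integral_of_le (by linarith),
      intervalIntegral.integral_comp_add_left (fun u => μ.real {ω | u ≤ X ω}) δ]
    simp
  · have hneg : ∀ᵐ ω ∂μ, max (X ω - δ) 0 = 0 := by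
      filter_upwards [hC] with ω hω
      exact max_eq_right (by linarith)
    have htail : ∀ u ∈ Ioc C δ, μ.real {ω | u ≤ X ω} = 0 := by
      intro u hu
      refine (measureReal_eq_zero_iff).2 (measure_eq_zero_iff_ae_notMem.2 ?_)
      filter_upwards [hC] with ω hω
      exact fun h => (not_le.2 hu.1) (h.trans hω)
    rw [integral_eq_zero_of_ae hneg, intervalIntegral.integral_of_ge hδ.le,
      setIntegral_eq_zero_of_forall_eq_zero htail, neg_zero]

lemma integral_max_const_sub_zero_eq_intervalIntegral_meas_ge {X : Ω → ℝ}
    (hX : AEMeasurable X μ) {C : ℝ} (hC : ∀ᵐ ω ∂μ, C ≤ X ω) (δ : ℝ) :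
    ∫ ω, max (δ - X ω) 0 ∂μ = ∫ u in C..δ, μ.real {ω | X ω ≤ u} := by
  have h := integral_max_sub_const_zero_eq_intervalIntegral_meas_le hX.neg
    (hC.mono fun ω hω => neg_le_neg hω) (-δ)
  simp only [Pi.neg_apply, neg_sub_neg] at h
  simp_rw [h, ← neg_le_neg_iff (b := X _)]
  exact (intervalIntegral.integral_comp_neg (fun u => μ.real {ω | u ≤ -X ω})).symm

end

theorem stmt_4_general
    {d : ℕ} (C : ℝ)
    {Ω : Type*} [MeasurableSpace Ω] (Pr : Measure Ω) [IsProbabilityMeasure Pr]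
    (ξs ξb : Ω → ℝ) (hmξs : Measurable ξs) (hmξb : Measurable ξb)
    (hindep : IndepFun ξs ξb Pr)
    (fs fb : ℝ → ℝ)
    (hfssupp : ∀ u, u ∉ Icc (-C) C → fs u = 0)
    (hfbsupp : ∀ u, u ∉ Icc (-C) C → fb u = 0)
    (hlaws : Measure.map ξs Pr = volume.withDensity (fun u => ENNReal.ofReal (fs u)))
    (hlawb : Measure.map ξb Pr = volume.withDensity (fun u => ENNReal.ofReal (fb u)))
    (θs θb x : EuclideanSpace ℝ (Fin d))
    (Fs Db I J : ℝ → ℝ)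
    (hFs : ∀ u, Fs u = (Pr {ω | ξs ω ≤ u}).toReal)
    (hDb : ∀ u, Db u = (Pr {ω | u ≤ ξb ω}).toReal)
    (hI : ∀ δ, I δ = ∫ u in δ..C, Db u)
    (hJ : ∀ δ, J δ = ∫ u in (-C)..δ, Fs u)
    (p : ℝ) :
    (∫ ω, (if ⟪x, θs⟫_ℝ + ξs ω ≤ p ∧ p ≤ ⟪x, θb⟫_ℝ + ξb ω
        then (⟪x, θb⟫_ℝ + ξb ω) - (⟪x, θs⟫_ℝ + ξs ω) else 0) ∂Pr)
      = I (p - ⟪x, θb⟫_ℝ) * Fs (p - ⟪x, θs⟫_ℝ)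
        + J (p - ⟪x, θs⟫_ℝ) * Db (p - ⟪x, θb⟫_ℝ) := by
  have hξs : ∀ᵐ ω ∂Pr, ξs ω ∈ Icc (-C) C :=
    ae_mem_of_map_eq_withDensity hmξs measurableSet_Icc hlaws fun u hu => by simp [hfssupp u hu]
  have hξb : ∀ᵐ ω ∂Pr, ξb ω ∈ Icc (-C) C :=
    ae_mem_of_map_eq_withDensity hmξb measurableSet_Icc hlawb fun u hu => by simp [hfbsupp u hu]
  simp_rw [ite_add_le_and_le_add_sub_eq_indicator_mul_max_add]
  set δs := p - ⟪x, θs⟫_ℝ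
  set δb := p - ⟪x, θb⟫_ℝ
  have hξb_le : ∀ᵐ ω ∂Pr, ξb ω ≤ C := hξb.mono fun _ h => h.2
  have hξs_ge : ∀ᵐ ω ∂Pr, -C ≤ ξs ω := hξs.mono fun _ h => h.1
  rw [integral_add
      (integrable_indicator_comp_mul hmξs measurableSet_Iic (g := fun v => max (v - δb) 0)
        (integrable_max_sub_const_zero_of_ae_le hmξb.aemeasurable hξb_le δb))
      (integrable_indicator_comp_mul hmξb measurableSet_Ici (g := fun u => max (δs - u) 0)
        (integrable_max_const_sub_zero_of_ae_ge hmξs.aemeasurable hξs_ge δs)),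
    hindep.integral_indicator_comp_mul hmξs hmξb measurableSet_Iic
      (g := fun v => max (v - δb) 0) (by fun_prop),
    hindep.symm.integral_indicator_comp_mul hmξb hmξs measurableSet_Ici
      (g := fun u => max (δs - u) 0) (by fun_prop),
    integral_max_sub_const_zero_eq_intervalIntegral_meas_le hmξb.aemeasurable hξb_le,
    integral_max_const_sub_zero_eq_intervalIntegral_meas_ge hmξs.aemeasurable hξs_ge, hI, hJ]
  simp only [hFs, hDb, mem_Iic, mem_Ici, measureReal_def]
  ring

/-- Lemma 1 of the paper: decomposition of the expected gain from trade.
If the seller's valuation is `s = ⟪x, θs⟫ + ξs` and the buyer's is `b = ⟪x, θb⟫ + ξb`, with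
`ξs, ξb` independent, centered, supported in `[-C, C]` and having densities bounded by `L`, then
`EGFT(x, p) = I(δᵇ)·Fˢ(δˢ) + J(δˢ)·Dᵇ(δᵇ)` where `δˢ = p - ⟪x, θs⟫`, `δᵇ = p - ⟪x, θb⟫`. -/
theorem stmt_4
    {d : ℕ} (A B C L : ℝ)
    (P : ℝ) (hP : P = C + A * B)
    {Ω : Type*} [MeasurableSpace Ω] (Pr : Measure Ω) [IsProbabilityMeasure Pr]
    (ξs ξb : Ω → ℝ) (hmξs : Measurable ξs) (hmξb : Measurable ξb)
    (hindep : IndepFun ξs ξb Pr)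
    (fs fb : ℝ → ℝ)
    (hfs0 : ∀ u, 0 ≤ fs u) (hfb0 : ∀ u, 0 ≤ fb u)
    (hfsL : ∀ u, fs u ≤ L) (hfbL : ∀ u, fb u ≤ L)
    (hfssupp : ∀ u, u ∉ Icc (-C) C → fs u = 0)
    (hfbsupp : ∀ u, u ∉ Icc (-C) C → fb u = 0)
    (hlaws : Measure.map ξs Pr = volume.withDensity (fun u => ENNReal.ofReal (fs u)))
    (hlawb : Measure.map ξb Pr = volume.withDensity (fun u => ENNReal.ofReal (fb u)))
    (hcents : ∫ ω, ξs ω ∂Pr = 0) (hcentb : ∫ ω, ξb ω ∂Pr = 0)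
    (θs θb x : EuclideanSpace ℝ (Fin d))
    (hθs : ‖θs‖ ≤ A) (hθb : ‖θb‖ ≤ A) (hx : ‖x‖ ≤ B)
    (Fs Db I J : ℝ → ℝ)
    (hFs : ∀ u, Fs u = (Pr {ω | ξs ω ≤ u}).toReal)
    (hDb : ∀ u, Db u = (Pr {ω | u ≤ ξb ω}).toReal)
    (hI : ∀ δ, I δ = ∫ u in δ..C, Db u)
    (hJ : ∀ δ, J δ = ∫ u in (-C)..δ, Fs u)
    (p : ℝ) :
    (∫ ω, (if ⟪x, θs⟫_ℝ + ξs ω ≤ p ∧ p ≤ ⟪x, θb⟫_ℝ + ξb ω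
        then (⟪x, θb⟫_ℝ + ξb ω) - (⟪x, θs⟫_ℝ + ξs ω) else 0) ∂Pr)
      = I (p - ⟪x, θb⟫_ℝ) * Fs (p - ⟪x, θs⟫_ℝ)
        + J (p - ⟪x, θs⟫_ℝ) * Db (p - ⟪x, θb⟫_ℝ) :=
  stmt_4_general C Pr ξs ξb hmξs hmξb hindep fs fb hfssupp hfbsupp hlaws hlawb θs θb x Fs Db I J hFs
    hDb hI hJ p
end

section
/- Let ξ^s, ξ^b be independent centered random variables supported in [−C,C] with densities f^s, f^b bounded by L; fix x, θ^s, θ^b with ‖x‖ ≤ B, ‖θ^s‖, ‖θ^b‖ ≤ A, set P = C + AB, and define EGFT(x,p) = E[1{xᵀθ^s + ξ^s ≤ p}·1{p ≤ xᵀθ^b + ξ^b}·((xᵀθ^b + ξ^b) − (xᵀθ^s + ξ^s))]. Then the map p ↦ EGFT(x,p) is 2LP-Lipschitz continuous on ℝ. -/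
open MeasureTheory ProbabilityTheory Set Filter Topology
open scoped InnerProductSpace

/-!
Raising the posted price from `p` to `q` changes the realized gain only if the seller's valuation
`a` or the buyer's valuation `b` lies in `[p, q]`, and the gain is then at most
`min (2P) (b - p)`, resp. `min (2P) (q - a)`. By independence, the expected change is at most
`L (q - p)` times the sum of the expectations of these two capped quantities, which is at most
`2P + (q - p)`. So `|EGFT q - EGFT p| ≤ 2LP (q - p) + L (q - p)²`, and subdividing `[p, q]`
into `n` pieces and letting `n → ∞` removes the quadratic term.
-/

section Subdivision

variable {E : Type*} [PseudoMetricSpace E] {f : ℝ → E} {K M : ℝ}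

theorem dist_le_add_sq_div_of_dist_le_add_sq
    (h : ∀ p q, p ≤ q → dist (f p) (f q) ≤ K * (q - p) + M * (q - p) ^ 2)
    {p q : ℝ} (hpq : p ≤ q) {n : ℕ} (hn : 0 < n) :
    dist (f p) (f q) ≤ K * (q - p) + M * (q - p) ^ 2 / n := by
  have hn' : (0 : ℝ) < n := Nat.cast_pos.mpr hn
  set δ := (q - p) / n
  have hδ : 0 ≤ δ := div_nonneg (sub_nonneg.mpr hpq) hn'.le
  calc dist (f p) (f q) = dist (f (p + δ * (0 : ℕ))) (f (p + δ * n)) := by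
        simp [δ, div_mul_cancel₀ _ hn'.ne']
    _ ≤ ∑ i ∈ Finset.range n, dist (f (p + δ * i)) (f (p + δ * (i + 1 : ℕ))) :=
        dist_le_range_sum_dist (fun i => f (p + δ * i)) n
    _ ≤ ∑ _i ∈ Finset.range n, (K * δ + M * δ ^ 2) := Finset.sum_le_sum fun i _ => by
        have hstep : p + δ * (i + 1 : ℕ) - (p + δ * i) = δ := by push_cast; ring
        simpa only [hstep] using h (p + δ * i) (p + δ * (i + 1 : ℕ)) (by linarith)
    _ = K * (q - p) + M * (q - p) ^ 2 / n := by
        simp only [Finset.sum_const, Finset.card_range, nsmul_eq_mul, δ]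
        field_simp

theorem dist_le_mul_dist_of_dist_le_add_sq
    (h : ∀ p q, p ≤ q → dist (f p) (f q) ≤ K * (q - p) + M * (q - p) ^ 2) (p q : ℝ) :
    dist (f p) (f q) ≤ K * dist p q := by
  wlog hpq : p ≤ q generalizing p q
  · rw [dist_comm, dist_comm p]; exact this q p (le_of_not_ge hpq)
  have hlim : Tendsto (fun n : ℕ => K * (q - p) + M * (q - p) ^ 2 / n) atTop
      (𝓝 (K * (q - p))) := by
    simpa using tendsto_const_nhds.add (tendsto_const_div_atTop_nhds_zero_nat (M * (q - p) ^ 2))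
  rw [Real.dist_eq, abs_sub_comm, abs_of_nonneg (sub_nonneg.mpr hpq)]
  exact ge_of_tendsto hlim (eventually_atTop.2
    ⟨1, fun n hn => dist_le_add_sq_div_of_dist_le_add_sq h hpq hn⟩)

end Subdivision

noncomputable def tradeGain (p a b : ℝ) : ℝ := if a ≤ p ∧ p ≤ b then b - a else 0

lemma abs_tradeGain_le {p a b D : ℝ} (hD : 0 ≤ D) (hab : b - a ≤ D) : |tradeGain p a b| ≤ D := by
  unfold tradeGain
  split_ifs with h
  · exact abs_le.mpr ⟨by linarith [h.1, h.2], hab⟩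
  · simpa using hD

lemma abs_tradeGain_sub_le {p q a b D : ℝ} (hpq : p ≤ q) (hD : 0 ≤ D) (hab : b - a ≤ D) :
    |tradeGain q a b - tradeGain p a b| ≤
      (Icc p q).indicator 1 a * min D (max (b - p) 0) +
        min D (max (q - a) 0) * (Icc p q).indicator 1 b := by
  have hcap : ∀ x, 0 ≤ min D (max x 0) := fun x => le_min hD (le_max_right _ _)
  have hI : ∀ x, 0 ≤ (Icc p q).indicator (1 : ℝ → ℝ) x := fun x => indicator_nonneg (by simp) x
  have hRHS := add_nonneg (mul_nonneg (hI a) (hcap (b - p))) (mul_nonneg (hcap (q - a)) (hI b))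
  unfold tradeGain
  by_cases hq : a ≤ q ∧ q ≤ b <;> by_cases hp : a ≤ p ∧ p ≤ b
  · simpa [hq, hp] using hRHS
  · have ha : a ∈ Icc p q := ⟨le_of_not_ge fun h => hp ⟨h, hpq.trans hq.2⟩, hq.1⟩
    rw [if_pos hq, if_neg hp, sub_zero, abs_of_nonneg (by linarith [hq.1, hq.2]),
      indicator_of_mem ha, Pi.one_apply, one_mul]
    refine le_add_of_le_of_nonneg (le_min hab (le_max_of_le_left ?_)) (mul_nonneg (hcap _) (hI b))
    linarith [ha.1]
  · have hb : b ∈ Icc p q := ⟨hp.2, le_of_not_ge fun h => hq ⟨hp.1.trans hpq, h⟩⟩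
    rw [if_neg hq, if_pos hp, zero_sub, abs_neg, abs_of_nonneg (by linarith [hp.1, hp.2]),
      indicator_of_mem hb, Pi.one_apply, mul_one]
    refine le_add_of_nonneg_of_le (mul_nonneg (hI a) (hcap _)) (le_min hab (le_max_of_le_left ?_))
    linarith [hb.2]
  · simpa [hq, hp] using hRHS

lemma min_max_add_min_max_le {D Δ x y : ℝ} (hΔ : 0 ≤ Δ) (h : x + y ≤ D + Δ) :
    min D (max x 0) + min D (max y 0) ≤ D + Δ := by
  simp only [min_def, max_def]
  split_ifs <;> linarith

lemma norm_min_max_zero_le {D : ℝ} (hD : 0 ≤ D) (x : ℝ) : ‖min D (max x 0)‖ ≤ D := by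
  rw [Real.norm_eq_abs, abs_of_nonneg (le_min hD (le_max_right _ _))]
  exact min_le_left _ _

section Expectation

variable {Ω : Type*} [MeasurableSpace Ω] {μ : Measure Ω} [IsProbabilityMeasure μ]
  {X Y : Ω → ℝ}

noncomputable def expectedGain (μ : Measure Ω) (X Y : Ω → ℝ) (p : ℝ) : ℝ :=
  ∫ ω, tradeGain p (X ω) (Y ω) ∂μ

lemma measurable_tradeGain (hX : Measurable X) (hY : Measurable Y) (p : ℝ) :
    Measurable fun ω => tradeGain p (X ω) (Y ω) :=
  Measurable.ite
    ((measurableSet_le hX measurable_const).inter (measurableSet_le measurable_const hY))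
    (hY.sub hX) measurable_const

lemma integral_cap_add_cap_le {D : ℝ} (hD : 0 ≤ D) (hX : Measurable X) (hY : Measurable Y)
    (hgap : ∀ᵐ ω ∂μ, Y ω - X ω ≤ D) {p q : ℝ} (hpq : p ≤ q) :
    ∫ ω, min D (max (Y ω - p) 0) ∂μ + ∫ ω, min D (max (q - X ω) 0) ∂μ ≤ D + (q - p) := by
  have hb : Integrable (fun ω => min D (max (Y ω - p) 0)) μ :=
    .of_bound (by fun_prop) D (ae_of_all _ fun _ => norm_min_max_zero_le hD _)
  have hs : Integrable (fun ω => min D (max (q - X ω) 0)) μ :=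
    .of_bound (by fun_prop) D (ae_of_all _ fun _ => norm_min_max_zero_le hD _)
  rw [← integral_add hb hs]
  calc _ ≤ ∫ _ω, (D + (q - p)) ∂μ := integral_mono_ae (hb.add hs) (integrable_const _) <| by
        filter_upwards [hgap] with ω hω
        exact min_max_add_min_max_le (sub_nonneg.mpr hpq) (by linarith)
    _ = D + (q - p) := by simp

lemma integral_abs_tradeGain_sub_le (hX : Measurable X) (hY : Measurable Y)
    (hXY : IndepFun X Y μ) {D : ℝ} (hD : 0 ≤ D) (hgap : ∀ᵐ ω ∂μ, Y ω - X ω ≤ D)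
    {p q : ℝ} (hpq : p ≤ q) :
    ∫ ω, |tradeGain q (X ω) (Y ω) - tradeGain p (X ω) (Y ω)| ∂μ ≤
      μ.real (X ⁻¹' Icc p q) * ∫ ω, min D (max (Y ω - p) 0) ∂μ +
        (∫ ω, min D (max (q - X ω) 0) ∂μ) * μ.real (Y ⁻¹' Icc p q) := by
  set φ : ℝ → ℝ := (Icc p q).indicator 1
  set ψb : ℝ → ℝ := fun b => min D (max (b - p) 0)
  set ψs : ℝ → ℝ := fun a => min D (max (q - a) 0)
  have hφ : Measurable φ := measurable_one.indicator measurableSet_Icc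
  have hψb : Measurable ψb := by fun_prop
  have hψs : Measurable ψs := by fun_prop
  have hφ1 : ∀ x, ‖φ x‖ ≤ 1 := fun x => by
    simpa using norm_indicator_le_norm_self (1 : ℝ → ℝ) x
  have hint : ∀ f g : ℝ → ℝ, Measurable f → Measurable g → (∀ x y, ‖f x * g y‖ ≤ D) →
      Integrable (fun ω => f (X ω) * g (Y ω)) μ := fun f g hf hg hfg =>
    .of_bound ((hf.comp hX).mul (hg.comp hY)).aestronglyMeasurable D (ae_of_all _ fun ω => hfg _ _)
  have hφψ : ∀ x y, ‖φ x * min D (max y 0)‖ ≤ D := fun x y =>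
    (norm_mul_le _ _).trans <| by
      simpa using mul_le_mul (hφ1 x) (norm_min_max_zero_le hD y) (norm_nonneg _) zero_le_one
  have hsb := hint φ ψb hφ hψb fun x y => hφψ x (y - p)
  have hbs := hint ψs φ hψs hφ fun x y => by rw [mul_comm]; exact hφψ y (q - x)
  calc ∫ ω, |tradeGain q (X ω) (Y ω) - tradeGain p (X ω) (Y ω)| ∂μ
      ≤ ∫ ω, (φ (X ω) * ψb (Y ω) + ψs (X ω) * φ (Y ω)) ∂μ := by
        refine integral_mono_of_nonneg (ae_of_all _ fun ω => abs_nonneg _) (hsb.add hbs) ?_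
        filter_upwards [hgap] with ω hω using abs_tradeGain_sub_le hpq hD hω
    _ = μ.real (X ⁻¹' Icc p q) * (∫ ω, ψb (Y ω) ∂μ) +
          (∫ ω, ψs (X ω) ∂μ) * μ.real (Y ⁻¹' Icc p q) := by
        rw [integral_add hsb hbs, ← integral_indicator_one (hX measurableSet_Icc),
          ← integral_indicator_one (hY measurableSet_Icc)]
        congr 1
        · exact IndepFun.integral_fun_mul_eq_mul_integral (hXY.comp hφ hψb)
            (hφ.comp hX).aestronglyMeasurable (hψb.comp hY).aestronglyMeasurable
        · exact IndepFun.integral_fun_mul_eq_mul_integral (hXY.comp hψs hφ)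
            (hψs.comp hX).aestronglyMeasurable (hφ.comp hY).aestronglyMeasurable

theorem dist_expectedGain_le (hX : Measurable X) (hY : Measurable Y) (hXY : IndepFun X Y μ)
    {L D : ℝ} (hD : 0 ≤ D) (hgap : ∀ᵐ ω ∂μ, Y ω - X ω ≤ D)
    (hXL : ∀ u v, u ≤ v → μ.real (X ⁻¹' Icc u v) ≤ L * (v - u))
    (hYL : ∀ u v, u ≤ v → μ.real (Y ⁻¹' Icc u v) ≤ L * (v - u)) {p q : ℝ} (hpq : p ≤ q) :
    dist (expectedGain μ X Y p) (expectedGain μ X Y q) ≤ L * D * (q - p) + L * (q - p) ^ 2 := by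
  have hL : 0 ≤ L := by simpa using measureReal_nonneg.trans (hXL 0 1 zero_le_one)
  have hΔ : 0 ≤ L * (q - p) := mul_nonneg hL (sub_nonneg.mpr hpq)
  have hint : ∀ r, Integrable (fun ω => tradeGain r (X ω) (Y ω)) μ := fun r =>
    .of_bound (measurable_tradeGain hX hY r).aestronglyMeasurable D <| by
      filter_upwards [hgap] with ω hω using abs_tradeGain_le hD hω
  have hcap (x : ℝ) : 0 ≤ min D (max x 0) := le_min hD (le_max_right _ _)
  calc dist (expectedGain μ X Y p) (expectedGain μ X Y q)
      = |∫ ω, (tradeGain q (X ω) (Y ω) - tradeGain p (X ω) (Y ω)) ∂μ| := by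
        rw [dist_comm, Real.dist_eq, expectedGain, expectedGain, integral_sub (hint q) (hint p)]
    _ ≤ ∫ ω, |tradeGain q (X ω) (Y ω) - tradeGain p (X ω) (Y ω)| ∂μ :=
        abs_integral_le_integral_abs
    _ ≤ μ.real (X ⁻¹' Icc p q) * ∫ ω, min D (max (Y ω - p) 0) ∂μ +
          (∫ ω, min D (max (q - X ω) 0) ∂μ) * μ.real (Y ⁻¹' Icc p q) :=
        integral_abs_tradeGain_sub_le hX hY hXY hD hgap hpq
    _ ≤ L * (q - p) * ∫ ω, min D (max (Y ω - p) 0) ∂μ +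
          (∫ ω, min D (max (q - X ω) 0) ∂μ) * (L * (q - p)) :=
        add_le_add (mul_le_mul_of_nonneg_right (hXL p q hpq) (integral_nonneg fun _ => hcap _))
          (mul_le_mul_of_nonneg_left (hYL p q hpq) (integral_nonneg fun _ => hcap _))
    _ = L * (q - p) * (∫ ω, min D (max (Y ω - p) 0) ∂μ + ∫ ω, min D (max (q - X ω) 0) ∂μ) := by
        ring
    _ ≤ L * (q - p) * (D + (q - p)) :=
        mul_le_mul_of_nonneg_left (integral_cap_add_cap_le hD hX hY hgap hpq) hΔ
    _ = L * D * (q - p) + L * (q - p) ^ 2 := by ring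

end Expectation

section Density

variable {Ω : Type*} [MeasurableSpace Ω] {μ : Measure Ω} {ξ : Ω → ℝ} {f : ℝ → ℝ}

lemma ae_mem_of_map_eq_withDensity_s10 (hξ : Measurable ξ) {S : Set ℝ} (hS : MeasurableSet S)
    (hf : ∀ u, u ∉ S → f u = 0)
    (hlaw : μ.map ξ = volume.withDensity fun u => ENNReal.ofReal (f u)) :
    ∀ᵐ ω ∂μ, ξ ω ∈ S := by
  refine ae_of_ae_map hξ.aemeasurable (ae_iff.mpr ?_)
  change μ.map ξ Sᶜ = 0
  rw [hlaw, withDensity_apply _ hS.compl]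
  exact (setLIntegral_congr_fun hS.compl fun u hu => by simp [hf u hu]).trans lintegral_zero

lemma measureReal_const_add_preimage_Icc_le (hξ : Measurable ξ) {L : ℝ} (hL : 0 ≤ L)
    (hfL : ∀ u, f u ≤ L)
    (hlaw : μ.map ξ = volume.withDensity fun u => ENNReal.ofReal (f u)) (c : ℝ) {u v : ℝ}
    (huv : u ≤ v) : μ.real ((fun ω => c + ξ ω) ⁻¹' Icc u v) ≤ L * (v - u) := by
  have hpre : (fun ω => c + ξ ω) ⁻¹' Icc u v = ξ ⁻¹' Icc (u - c) (v - c) := by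
    rw [← preimage_const_add_Icc]; rfl
  rw [hpre, ← map_measureReal_apply hξ measurableSet_Icc, measureReal_def, hlaw,
    withDensity_apply _ measurableSet_Icc]
  refine ENNReal.toReal_le_of_le_ofReal (mul_nonneg hL (sub_nonneg.mpr huv)) ?_
  calc ∫⁻ w in Icc (u - c) (v - c), ENNReal.ofReal (f w)
      ≤ ∫⁻ _ in Icc (u - c) (v - c), ENNReal.ofReal L :=
        lintegral_mono fun w => ENNReal.ofReal_le_ofReal (hfL w)
    _ = ENNReal.ofReal (L * (v - u)) := by
        rw [setLIntegral_const, Real.volume_Icc, ← ENNReal.ofReal_mul hL, sub_sub_sub_cancel_right]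

end Density

theorem stmt_10_general
    {d : ℕ} (A B C L : ℝ)
    (P : ℝ) (hP : P = C + A * B)
    {Ω : Type*} [MeasurableSpace Ω] (Pr : Measure Ω) [IsProbabilityMeasure Pr]
    (ξs ξb : Ω → ℝ) (hmξs : Measurable ξs) (hmξb : Measurable ξb)
    (hindep : IndepFun ξs ξb Pr)
    (fs fb : ℝ → ℝ)
    (hfs0 : ∀ u, 0 ≤ fs u)
    (hfsL : ∀ u, fs u ≤ L) (hfbL : ∀ u, fb u ≤ L)
    (hfssupp : ∀ u, u ∉ Icc (-C) C → fs u = 0)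
    (hfbsupp : ∀ u, u ∉ Icc (-C) C → fb u = 0)
    (hlaws : Measure.map ξs Pr = volume.withDensity (fun u => ENNReal.ofReal (fs u)))
    (hlawb : Measure.map ξb Pr = volume.withDensity (fun u => ENNReal.ofReal (fb u)))
    (θs θb x : EuclideanSpace ℝ (Fin d))
    (hθs : ‖θs‖ ≤ A) (hθb : ‖θb‖ ≤ A) (hx : ‖x‖ ≤ B)
    (EGFT : ℝ → ℝ)
    (hEGFT : ∀ p, EGFT p =
      ∫ ω, (if ⟪x, θs⟫_ℝ + ξs ω ≤ p ∧ p ≤ ⟪x, θb⟫_ℝ + ξb ω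
        then (⟪x, θb⟫_ℝ + ξb ω) - (⟪x, θs⟫_ℝ + ξs ω) else 0) ∂Pr) :
    ∀ p₁ p₂ : ℝ, |EGFT p₁ - EGFT p₂| ≤ 2 * L * P * |p₁ - p₂| := by
  have hL : 0 ≤ L := (hfs0 0).trans (hfsL 0)
  have hinner {θ : EuclideanSpace ℝ (Fin d)} (hθ : ‖θ‖ ≤ A) : |⟪x, θ⟫_ℝ| ≤ A * B :=
    (abs_real_inner_le_norm x θ).trans (by nlinarith [norm_nonneg x, norm_nonneg θ])
  have hs := abs_le.mp (hinner hθs)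
  have hb := abs_le.mp (hinner hθb)
  have hξs := ae_mem_of_map_eq_withDensity_s10 hmξs measurableSet_Icc hfssupp hlaws
  have hξb := ae_mem_of_map_eq_withDensity_s10 hmξb measurableSet_Icc hfbsupp hlawb
  have hP0 : 0 ≤ 2 * P := by
    obtain ⟨ω, hω⟩ := hξs.exists
    linarith [hω.1, hω.2]
  have hgap : ∀ᵐ ω ∂Pr, (⟪x, θb⟫_ℝ + ξb ω) - (⟪x, θs⟫_ℝ + ξs ω) ≤ 2 * P := by
    filter_upwards [hξs, hξb] with ω hωs hωb
    linarith [hωs.1, hωb.2]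
  have hEGFT' : EGFT = expectedGain Pr (fun ω => ⟪x, θs⟫_ℝ + ξs ω) (fun ω => ⟪x, θb⟫_ℝ + ξb ω) :=
    funext hEGFT
  intro p₁ p₂
  have hLip := dist_le_mul_dist_of_dist_le_add_sq (fun p q hpq =>
    dist_expectedGain_le (hmξs.const_add _) (hmξb.const_add _)
      (hindep.comp (measurable_const_add _) (measurable_const_add _)) hP0 hgap
      (fun u v => measureReal_const_add_preimage_Icc_le hmξs hL hfsL hlaws _)
      (fun u v => measureReal_const_add_preimage_Icc_le hmξb hL hfbL hlawb _) hpq) p₁ p₂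
  rw [← hEGFT', Real.dist_eq, Real.dist_eq] at hLip
  linarith

/-- in the noisy linear model, the expected gain from trade
`p ↦ EGFT(x, p)` is `2LP`-Lipschitz continuous on `ℝ`. -/
theorem stmt_10
    {d : ℕ} (A B C L : ℝ)
    (P : ℝ) (hP : P = C + A * B)
    {Ω : Type*} [MeasurableSpace Ω] (Pr : Measure Ω) [IsProbabilityMeasure Pr]
    (ξs ξb : Ω → ℝ) (hmξs : Measurable ξs) (hmξb : Measurable ξb)
    (hindep : IndepFun ξs ξb Pr)
    (fs fb : ℝ → ℝ)
    (hfs0 : ∀ u, 0 ≤ fs u) (hfb0 : ∀ u, 0 ≤ fb u)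
    (hfsL : ∀ u, fs u ≤ L) (hfbL : ∀ u, fb u ≤ L)
    (hfssupp : ∀ u, u ∉ Icc (-C) C → fs u = 0)
    (hfbsupp : ∀ u, u ∉ Icc (-C) C → fb u = 0)
    (hlaws : Measure.map ξs Pr = volume.withDensity (fun u => ENNReal.ofReal (fs u)))
    (hlawb : Measure.map ξb Pr = volume.withDensity (fun u => ENNReal.ofReal (fb u)))
    (hcents : ∫ ω, ξs ω ∂Pr = 0) (hcentb : ∫ ω, ξb ω ∂Pr = 0)
    (θs θb x : EuclideanSpace ℝ (Fin d))
    (hθs : ‖θs‖ ≤ A) (hθb : ‖θb‖ ≤ A) (hx : ‖x‖ ≤ B)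
    (EGFT : ℝ → ℝ)
    (hEGFT : ∀ p, EGFT p =
      ∫ ω, (if ⟪x, θs⟫_ℝ + ξs ω ≤ p ∧ p ≤ ⟪x, θb⟫_ℝ + ξb ω
        then (⟪x, θb⟫_ℝ + ξb ω) - (⟪x, θs⟫_ℝ + ξs ω) else 0) ∂Pr) :
    ∀ p₁ p₂ : ℝ, |EGFT p₁ - EGFT p₂| ≤ 2 * L * P * |p₁ - p₂| :=
  stmt_10_general A B C L P hP Pr ξs ξb hmξs hmξb hindep fs fb hfs0 hfsL hfbL hfssupp hfbsupp hlaws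
    hlawb θs θb x hθs hθb hx EGFT hEGFT
end

section
/- Let ξ^b be a centered random variable supported in [−C,C] with density bounded by L, let x ∈ ℝ^d, θ^b ∈ ℝ^d with ‖x‖ ≤ B, ‖θ^b‖ ≤ A, set P = C + AB, and let p be drawn uniformly at random from [−P,P], independently of ξ^b. Then for every c ∈ [−P, P], E[2P·1{c ≤ p ≤ xᵀθ^b + ξ^b}] = I(c − xᵀθ^b), where I(δ) = ∫_δ^C D^b(u)du and D^b(u) = P(ξ^b ≥ u). Analogously, for ξ^s centered, supported in [−C,C], and independent of p, and every c ∈ [−P,P], E[2P·1{xᵀθ^s + ξ^s ≤ p ≤ c}] = J(c − xᵀθ^s), where J(δ) = ∫_{−C}^δ F^s(u)du and F^s is the c.d.f. of ξ^s. -/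
open MeasureTheory ProbabilityTheory Set
open scoped InnerProductSpace

/-! Conditioning on the noise `ξ`, independence turns the probability of `f ξ ≤ p ≤ g ξ` into the
uniform mass `(g ξ - f ξ)⁺ / 2P` of `[f ξ, g ξ]`, valid because `P = C + AB`, `|ξ| ≤ C` and
`|⟪x, θ⟫| ≤ AB` keep this interval inside `[-P, P]`. Hence `2P` times the probability is
`E[(ξ - δ)⁺]` for the buyer and `E[(δ - ξ)⁺]` for the seller, and Tonelli's theorem (the layer-cake
formula) rewrites these as `∫_δ^C P(ξ ≥ u) du` and `∫_{-C}^δ P(ξ ≤ u) du`. -/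

theorem ae_mem_withDensity_of_eq_zero {α : Type*} [MeasurableSpace α] {μ : Measure α}
    {f : α → ENNReal} {s : Set α} (hs : MeasurableSet s) (hf : ∀ x ∉ s, f x = 0) :
    ∀ᵐ x ∂μ.withDensity f, x ∈ s := by
  change μ.withDensity f sᶜ = 0
  rw [withDensity_apply f hs.compl, setLIntegral_congr_fun hs.compl hf, lintegral_zero]

theorem abs_inner_le_mul_of_norm_le {E : Type*} [NormedAddCommGroup E] [InnerProductSpace ℝ E]
    {x θ : E} {A B : ℝ} (hx : ‖x‖ ≤ B) (hθ : ‖θ‖ ≤ A) : |⟪x, θ⟫_ℝ| ≤ A * B :=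
  calc |⟪x, θ⟫_ℝ| ≤ ‖x‖ * ‖θ‖ := abs_real_inner_le_norm x θ
    _ ≤ B * A := mul_le_mul hx hθ (norm_nonneg θ) ((norm_nonneg x).trans hx)
    _ = A * B := mul_comm B A

theorem setLIntegral_measure_Ici_eq (ν : Measure ℝ) [SFinite ν] (s : Set ℝ) :
    ∫⁻ u in s, ν (Ici u) = ∫⁻ v, volume (Iic v ∩ s) ∂ν := by
  have hS : MeasurableSet {q : ℝ × ℝ | q.1 ≤ q.2} := measurableSet_le measurable_fst measurable_snd
  calc ∫⁻ u in s, ν (Ici u) = (volume.restrict s).prod ν {q | q.1 ≤ q.2} :=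
        (Measure.prod_apply hS).symm
    _ = ∫⁻ v, volume.restrict s (Iic v) ∂ν := Measure.prod_apply_symm hS
    _ = ∫⁻ v, volume (Iic v ∩ s) ∂ν := by simp_rw [Measure.restrict_apply measurableSet_Iic]

theorem intervalIntegral_measure_Ici_eq (ν : Measure ℝ) [IsFiniteMeasure ν] {C : ℝ}
    (hC : ∀ᵐ v ∂ν, v ≤ C) (δ : ℝ) :
    ∫ u in δ..C, (ν (Ici u)).toReal = (∫⁻ v, ENNReal.ofReal (v - δ) ∂ν).toReal := by
  have hmeas : Measurable fun u => ν (Ici u) :=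
    Antitone.measurable fun _ _ h => measure_mono (Ici_subset_Ici.2 h)
  have hvanish : ∀ u ∈ Ioc C δ, (ν (Ici u)).toReal = 0 := fun u hu => by
    rw [ae_iff] at hC
    have : ν (Ici u) = 0 := measure_mono_null (fun v hv => not_le.2 (hu.1.trans_le hv)) hC
    rw [this, ENNReal.toReal_zero]
  rw [intervalIntegral, setIntegral_congr_fun measurableSet_Ioc hvanish, integral_zero, sub_zero,
    integral_toReal hmeas.aemeasurable (ae_of_all _ fun _ => measure_lt_top _ _),
    setLIntegral_measure_Ici_eq]
  congr 1
  refine lintegral_congr_ae (hC.mono fun v hv => ?_)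
  dsimp only
  rw [Iic_inter_Ioc_of_le hv, Real.volume_Ioc]

theorem intervalIntegral_measure_Iic_eq (ν : Measure ℝ) [IsFiniteMeasure ν] {a : ℝ}
    (ha : ∀ᵐ v ∂ν, a ≤ v) (δ : ℝ) :
    ∫ u in a..δ, (ν (Iic u)).toReal = (∫⁻ v, ENNReal.ofReal (δ - v) ∂ν).toReal := by
  have hneg : ∀ᵐ v ∂ν.map Neg.neg, v ≤ -a :=
    (ae_map_iff measurable_neg.aemeasurable measurableSet_Iic).2 (ha.mono fun _ => neg_le_neg)
  have key := intervalIntegral_measure_Ici_eq (ν.map Neg.neg) hneg (-δ)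
  rw [lintegral_map (by fun_prop) measurable_neg] at key
  simp only [Measure.map_apply measurable_neg measurableSet_Ici, neg_preimage, neg_Ici] at key
  rw [← intervalIntegral.integral_comp_neg] at key
  simpa [neg_add_eq_sub] using key

theorem uniform_measure_Icc {P a b : ℝ} (ha : -P ≤ a) (hb : b ≤ P) :
    ((ENNReal.ofReal (2 * P))⁻¹ • volume.restrict (Icc (-P) P)) (Icc a b)
      = (ENNReal.ofReal (2 * P))⁻¹ * ENNReal.ofReal (b - a) := by
  rw [Measure.smul_apply, smul_eq_mul, Measure.restrict_apply measurableSet_Icc, Icc_inter_Icc,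
    max_eq_left ha, min_eq_left hb, Real.volume_Icc]

section UniformPrice

variable {Ω : Type*} [MeasurableSpace Ω] {Pr : Measure Ω} [IsFiniteMeasure Pr]
  {p ξ : Ω → ℝ} {P : ℝ}

theorem measure_le_and_le_eq_lintegral (hp : Measurable p) (hξ : Measurable ξ)
    (hind : IndepFun p ξ Pr) {f g : ℝ → ℝ} (hf : Measurable f) (hg : Measurable g) :
    Pr {ω | f (ξ ω) ≤ p ω ∧ p ω ≤ g (ξ ω)} = ∫⁻ v, Pr.map p (Icc (f v) (g v)) ∂Pr.map ξ := by
  have hS : MeasurableSet {q : ℝ × ℝ | f q.1 ≤ q.2 ∧ q.2 ≤ g q.1} :=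
    (measurableSet_le (hf.comp measurable_fst) measurable_snd).inter
      (measurableSet_le measurable_snd (hg.comp measurable_fst))
  calc Pr {ω | f (ξ ω) ≤ p ω ∧ p ω ≤ g (ξ ω)}
      = Pr.map (fun ω => (ξ ω, p ω)) {q | f q.1 ≤ q.2 ∧ q.2 ≤ g q.1} :=
        (Measure.map_apply (hξ.prodMk hp) hS).symm
    _ = (Pr.map ξ).prod (Pr.map p) {q | f q.1 ≤ q.2 ∧ q.2 ≤ g q.1} := by
        rw [(indepFun_iff_map_prod_eq_prod_map_map hξ.aemeasurable hp.aemeasurable).1 hind.symm]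
    _ = ∫⁻ v, Pr.map p (Icc (f v) (g v)) ∂Pr.map ξ := Measure.prod_apply hS

theorem integral_mul_ite_le_and_le (hp : Measurable p) (hξ : Measurable ξ)
    (hind : IndepFun p ξ Pr) (hP : 0 < P)
    (hplaw : Pr.map p = (ENNReal.ofReal (2 * P))⁻¹ • volume.restrict (Icc (-P) P))
    {f g : ℝ → ℝ} (hf : Measurable f) (hg : Measurable g)
    (hfg : ∀ᵐ v ∂Pr.map ξ, -P ≤ f v ∧ g v ≤ P) :
    ∫ ω, 2 * P * (if f (ξ ω) ≤ p ω ∧ p ω ≤ g (ξ ω) then (1 : ℝ) else 0) ∂Pr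
      = (∫⁻ v, ENNReal.ofReal (g v - f v) ∂Pr.map ξ).toReal := by
  set E := {ω | f (ξ ω) ≤ p ω ∧ p ω ≤ g (ξ ω)}
  have hE : MeasurableSet E :=
    (measurableSet_le (hf.comp hξ) hp).inter (measurableSet_le hp (hg.comp hξ))
  have h2P : ENNReal.ofReal (2 * P) ≠ 0 := by simpa using hP
  calc ∫ ω, 2 * P * (if f (ξ ω) ≤ p ω ∧ p ω ≤ g (ξ ω) then (1 : ℝ) else 0) ∂Pr
      = 2 * P * Pr.real E := by
        rw [integral_const_mul, ← integral_indicator_one hE]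
        simp only [indicator_apply, Pi.one_apply, E, mem_ofPred_eq]
    _ = 2 * P * ((ENNReal.ofReal (2 * P))⁻¹ * ∫⁻ v, ENNReal.ofReal (g v - f v) ∂Pr.map ξ).toReal := by
        rw [measureReal_def, measure_le_and_le_eq_lintegral hp hξ hind hf hg, hplaw,
          lintegral_congr_ae (hfg.mono fun v hv => uniform_measure_Icc hv.1 hv.2),
          lintegral_const_mul' _ _ (ENNReal.inv_ne_top.2 h2P)]
    _ = (∫⁻ v, ENNReal.ofReal (g v - f v) ∂Pr.map ξ).toReal := by
        rw [ENNReal.toReal_mul, ENNReal.toReal_inv, ENNReal.toReal_ofReal (by positivity)]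
        field_simp

end UniformPrice

theorem stmt_13_general
    {d : ℕ} (A B C : ℝ)
    (P : ℝ) (hP : P = C + A * B) (hPpos : 0 < P)
    {Ω : Type*} [MeasurableSpace Ω] (Pr : Measure Ω) [IsProbabilityMeasure Pr]
    (ξs ξb : Ω → ℝ) (hmξs : Measurable ξs) (hmξb : Measurable ξb)
    (fs fb : ℝ → ℝ)
    (hfssupp : ∀ u, u ∉ Icc (-C) C → fs u = 0)
    (hfbsupp : ∀ u, u ∉ Icc (-C) C → fb u = 0)
    (hlaws : Measure.map ξs Pr = volume.withDensity (fun u => ENNReal.ofReal (fs u)))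
    (hlawb : Measure.map ξb Pr = volume.withDensity (fun u => ENNReal.ofReal (fb u)))
    (θs θb x : EuclideanSpace ℝ (Fin d))
    (hθs : ‖θs‖ ≤ A) (hθb : ‖θb‖ ≤ A) (hx : ‖x‖ ≤ B)
    (p : Ω → ℝ) (hmp : Measurable p)
    (hplaw : Measure.map p Pr
      = (ENNReal.ofReal (2 * P))⁻¹ • volume.restrict (Icc (-P) P))
    (hindeps : IndepFun p ξs Pr) (hindepb : IndepFun p ξb Pr)
    (Fs Db I J : ℝ → ℝ)
    (hFs : ∀ u, Fs u = (Pr {ω | ξs ω ≤ u}).toReal)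
    (hDb : ∀ u, Db u = (Pr {ω | u ≤ ξb ω}).toReal)
    (hI : ∀ δ, I δ = ∫ u in δ..C, Db u)
    (hJ : ∀ δ, J δ = ∫ u in (-C)..δ, Fs u) :
    ∀ c ∈ Icc (-P) P,
      (∫ ω, 2 * P * (if c ≤ p ω ∧ p ω ≤ ⟪x, θb⟫_ℝ + ξb ω then (1:ℝ) else 0) ∂Pr
          = I (c - ⟪x, θb⟫_ℝ))
      ∧ (∫ ω, 2 * P * (if ⟪x, θs⟫_ℝ + ξs ω ≤ p ω ∧ p ω ≤ c then (1:ℝ) else 0) ∂Pr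
          = J (c - ⟪x, θs⟫_ℝ)) := by
  intro c hc
  obtain ⟨hmb_lo, hmb_hi⟩ := abs_le.1 (abs_inner_le_mul_of_norm_le hx hθb)
  obtain ⟨hms_lo, hms_hi⟩ := abs_le.1 (abs_inner_le_mul_of_norm_le hx hθs)
  have hsuppb : ∀ᵐ v ∂Pr.map ξb, v ∈ Icc (-C) C := by
    rw [hlawb]
    exact ae_mem_withDensity_of_eq_zero measurableSet_Icc fun u hu => by simp [hfbsupp u hu]
  have hsupps : ∀ᵐ v ∂Pr.map ξs, v ∈ Icc (-C) C := by
    rw [hlaws]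
    exact ae_mem_withDensity_of_eq_zero measurableSet_Icc fun u hu => by simp [hfssupp u hu]
  have hDb' : ∀ u, Db u = (Pr.map ξb (Ici u)).toReal := fun u => by
    rw [hDb, Measure.map_apply hmξb measurableSet_Ici]; rfl
  have hFs' : ∀ u, Fs u = (Pr.map ξs (Iic u)).toReal := fun u => by
    rw [hFs, Measure.map_apply hmξs measurableSet_Iic]; rfl
  constructor
  · rw [integral_mul_ite_le_and_le (f := fun _ => c) (g := (⟪x, θb⟫_ℝ + ·)) hmp hmξb hindepb hPpos
      hplaw measurable_const (measurable_const_add _)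
      (hsuppb.mono fun v hv => ⟨hc.1, by linarith [hv.2]⟩)]
    simp only [hI, hDb', intervalIntegral_measure_Ici_eq _ (hsuppb.mono fun _ hv => hv.2)]
    congr 2; ext v; congr 1; ring
  · rw [integral_mul_ite_le_and_le (f := (⟪x, θs⟫_ℝ + ·)) (g := fun _ => c) hmp hmξs hindeps hPpos
      hplaw (measurable_const_add _) measurable_const
      (hsupps.mono fun v hv => ⟨by linarith [hv.1], hc.2⟩)]
    simp only [hJ, hFs', intervalIntegral_measure_Iic_eq _ (hsupps.mono fun _ hv => hv.1), sub_sub]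

/-- the identities underlying the Est-Int subroutine. For a uniform price
`p ∼ U([-P,P])` independent of the noise, `E[2P·1{c ≤ p ≤ ⟪x,θb⟫ + ξᵇ}] = I(c − ⟪x,θb⟫)`
and `E[2P·1{⟪x,θs⟫ + ξˢ ≤ p ≤ c}] = J(c − ⟪x,θs⟫)`. -/
theorem stmt_13
    {d : ℕ} (A B C L : ℝ)
    (P : ℝ) (hP : P = C + A * B) (hPpos : 0 < P)
    {Ω : Type*} [MeasurableSpace Ω] (Pr : Measure Ω) [IsProbabilityMeasure Pr]
    (ξs ξb : Ω → ℝ) (hmξs : Measurable ξs) (hmξb : Measurable ξb)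
    (fs fb : ℝ → ℝ)
    (hfs0 : ∀ u, 0 ≤ fs u) (hfb0 : ∀ u, 0 ≤ fb u)
    (hfsL : ∀ u, fs u ≤ L) (hfbL : ∀ u, fb u ≤ L)
    (hfssupp : ∀ u, u ∉ Icc (-C) C → fs u = 0)
    (hfbsupp : ∀ u, u ∉ Icc (-C) C → fb u = 0)
    (hlaws : Measure.map ξs Pr = volume.withDensity (fun u => ENNReal.ofReal (fs u)))
    (hlawb : Measure.map ξb Pr = volume.withDensity (fun u => ENNReal.ofReal (fb u)))
    (hcents : ∫ ω, ξs ω ∂Pr = 0) (hcentb : ∫ ω, ξb ω ∂Pr = 0)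
    (θs θb x : EuclideanSpace ℝ (Fin d))
    (hθs : ‖θs‖ ≤ A) (hθb : ‖θb‖ ≤ A) (hx : ‖x‖ ≤ B)
    (p : Ω → ℝ) (hmp : Measurable p)
    (hplaw : Measure.map p Pr
      = (ENNReal.ofReal (2 * P))⁻¹ • volume.restrict (Icc (-P) P))
    (hindeps : IndepFun p ξs Pr) (hindepb : IndepFun p ξb Pr)
    (Fs Db I J : ℝ → ℝ)
    (hFs : ∀ u, Fs u = (Pr {ω | ξs ω ≤ u}).toReal)
    (hDb : ∀ u, Db u = (Pr {ω | u ≤ ξb ω}).toReal)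
    (hI : ∀ δ, I δ = ∫ u in δ..C, Db u)
    (hJ : ∀ δ, J δ = ∫ u in (-C)..δ, Fs u) :
    ∀ c ∈ Icc (-P) P,
      (∫ ω, 2 * P * (if c ≤ p ω ∧ p ω ≤ ⟪x, θb⟫_ℝ + ξb ω then (1:ℝ) else 0) ∂Pr
          = I (c - ⟪x, θb⟫_ℝ))
      ∧ (∫ ω, 2 * P * (if ⟪x, θs⟫_ℝ + ξs ω ≤ p ω ∧ p ω ≤ c then (1:ℝ) else 0) ∂Pr
          = J (c - ⟪x, θs⟫_ℝ)) :=
  stmt_13_general A B C P hP hPpos Pr ξs ξb hmξs hmξb fs fb hfssupp hfbsupp hlaws hlawb θs θb x hθs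
    hθb hx p hmp hplaw hindeps hindepb Fs Db I J hFs hDb hI hJ
end
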